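/- arXiv:1211.2766 — 4 statements merged into one kernel-verified Lean document; each statement's English description precedes it below -/
import Mathlib

section
/- Let ρ be the uniform probability measure on [0,1] and for i = 1,...,N let F^i : [0,1] → [0,1] be given by F^i(x) = x + (i-1)/N mod 1 (translation by (i-1)/N modulo 1). Then the measure ρ_N = (F^1,...,F^N)_# ρ minimizes ∫ Σ_{i≠j} 1/|x_i − x_j| dγ over all probability measures γ on ℝ^N with every 1-dimensional marginal equal to ρ. -/
open MeasureTheory ENNReal

/-- The one-dimensional Coulomb cost `∑_{i ≠ j} 1/|x_i - x_j|`, valued in `[0,∞]`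
(equal to `+∞` on the diagonal sets `x_i = x_j`). -/
noncomputable def coul1 (N : ℕ) (x : Fin N → ℝ) : ℝ≥0∞ :=
  ∑ i : Fin N, ∑ j : Fin N, if i ≠ j then (ENNReal.ofReal |x i - x j|)⁻¹ else 0


noncomputable def phiF (N k : ℕ) (t : ℝ) : ℝ :=
  max (t - k / N) 0 + max ((N - k) / N - t) 0 + (N - k) * (2 * k - N) / N ^ 2

lemma phiF_nonneg (N k : ℕ) (hN : 0 < N) (hk : k ≤ N) (t : ℝ) : 0 ≤ phiF N k t := by
  have hN' : (0:ℝ) < N := by exact_mod_cast hN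
  have hk' : (k:ℝ) ≤ N := by exact_mod_cast hk
  unfold phiF
  rcases le_or_gt (N:ℝ) (2 * k) with h | h
  · have : (0:ℝ) ≤ (N - k) * (2 * k - N) / N ^ 2 := by
      apply div_nonneg (mul_nonneg (by linarith) (by linarith)) (by positivity)
    linarith [le_max_right (t - (k:ℝ)/N) 0, le_max_right (((N:ℝ) - k)/N - t) 0]
  · have h1 : t - (k:ℝ)/N ≤ max (t - (k:ℝ)/N) 0 := le_max_left _ _
    have h2 : ((N:ℝ) - k)/N - t ≤ max (((N:ℝ)-k)/N - t) 0 := le_max_left _ _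
    have hconst : -(((N:ℝ) - k) * (2*k - N) / N^2) ≤ ((N:ℝ) - 2*k)/N := by
      have hle : ((N:ℝ)-k)*((N:ℝ)-2*k) ≤ (N:ℝ)*((N:ℝ)-2*k) := by nlinarith [Nat.cast_nonneg (α := ℝ) k]
      calc -(((N:ℝ) - k) * (2*k - N) / N^2) = (((N:ℝ)-k)*((N:ℝ)-2*k))/N^2 := by ring
        _ ≤ ((N:ℝ)*((N:ℝ)-2*k))/N^2 := by gcongr
        _ = ((N:ℝ)-2*k)/N := by field_simp
    have heq : ((N:ℝ) - 2*k)/N = (t - (k:ℝ)/N) + (((N:ℝ)-k)/N - t) := by ring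
    linarith

lemma contA (a : ℝ) : Continuous fun t : ℝ => max (t - a) 0 :=
  (continuous_id.sub continuous_const).max continuous_const

lemma contB (a : ℝ) : Continuous fun t : ℝ => max (a - t) 0 :=
  (continuous_const.sub continuous_id).max continuous_const

lemma integral_max_sub (a : ℝ) (ha : 0 ≤ a) (ha1 : a ≤ 1) :
    ∫ t in Set.Icc (0:ℝ) 1, max (t - a) 0 = (1 - a)^2 / 2 := by
  rw [MeasureTheory.integral_Icc_eq_integral_Ioc,
    ← intervalIntegral.integral_of_le (by norm_num : (0:ℝ) ≤ 1)]
  have h1 : ∫ t in (0:ℝ)..a, max (t - a) 0 = 0 := by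
    rw [intervalIntegral.integral_congr (g := fun _ => (0:ℝ))]
    · simp
    · intro t ht
      rw [Set.uIcc_of_le ha] at ht
      simp only [max_eq_right_iff]
      linarith [ht.2]
  have h2 : ∫ t in a..(1:ℝ), max (t - a) 0 = (1-a)^2/2 := by
    rw [intervalIntegral.integral_congr (g := fun t => t - a)]
    · rw [intervalIntegral.integral_sub intervalIntegral.intervalIntegrable_id
        (intervalIntegrable_const (c := a)), integral_id,
        intervalIntegral.integral_const]
      simp [smul_eq_mul]; ring
    · intro t ht
      rw [Set.uIcc_of_le ha1] at ht
      simp only [max_eq_left_iff]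
      linarith [ht.1]
  have h3 := intervalIntegral.integral_add_adjacent_intervals
    (a := (0:ℝ)) (b := a) (c := 1) (f := fun t => max (t - a) 0)
    ((contA a).intervalIntegrable (μ := volume) _ _) ((contA a).intervalIntegrable (μ := volume) _ _)
  rw [← h3, h1, h2, zero_add]

lemma integral_max_sub' (a : ℝ) (ha : 0 ≤ a) (ha1 : a ≤ 1) :
    ∫ t in Set.Icc (0:ℝ) 1, max (a - t) 0 = a^2 / 2 := by
  rw [MeasureTheory.integral_Icc_eq_integral_Ioc,
    ← intervalIntegral.integral_of_le (by norm_num : (0:ℝ) ≤ 1)]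
  have h1 : ∫ t in (0:ℝ)..a, max (a - t) 0 = a^2/2 := by
    rw [intervalIntegral.integral_congr (g := fun t => a - t)]
    · rw [intervalIntegral.integral_sub (intervalIntegrable_const (c := a))
        intervalIntegral.intervalIntegrable_id, integral_id,
        intervalIntegral.integral_const]
      simp [smul_eq_mul]; ring
    · intro t ht
      rw [Set.uIcc_of_le ha] at ht
      simp only [max_eq_left_iff]
      linarith [ht.2]
  have h2 : ∫ t in a..(1:ℝ), max (a - t) 0 = 0 := by
    rw [intervalIntegral.integral_congr (g := fun _ => (0:ℝ))]
    · simp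
    · intro t ht
      rw [Set.uIcc_of_le ha1] at ht
      simp only [max_eq_right_iff]
      linarith [ht.1]
  have h3 := intervalIntegral.integral_add_adjacent_intervals
    (a := (0:ℝ)) (b := a) (c := 1) (f := fun t => max (a - t) 0)
    ((contB a).intervalIntegrable (μ := volume) _ _) ((contB a).intervalIntegrable (μ := volume) _ _)
  rw [← h3, h1, h2, add_zero]

lemma phiF_continuous (N k : ℕ) : Continuous (phiF N k) := by
  unfold phiF
  exact ((contA _).add (contB _)).add continuous_const

lemma integral_phiF (N k : ℕ) (hN : 0 < N) (hk : k ≤ N) :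
    ∫ t in Set.Icc (0:ℝ) 1, phiF N k t = k * (N - k) / N ^ 2 := by
  have hN' : (0:ℝ) < N := by exact_mod_cast hN
  have hk' : (k:ℝ) ≤ N := by exact_mod_cast hk
  have hkN : (0:ℝ) ≤ (k:ℝ)/N := by positivity
  have hkN1 : (k:ℝ)/N ≤ 1 := by rw [div_le_one hN']; exact hk'
  have huN : (0:ℝ) ≤ ((N:ℝ)-k)/N := by apply div_nonneg (by linarith) hN'.le
  have huN1 : ((N:ℝ)-k)/N ≤ 1 := by rw [div_le_one hN']; linarith [Nat.cast_nonneg (α := ℝ) k]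
  have i1 : Integrable (fun t => max (t - (k:ℝ)/N) 0) (volume.restrict (Set.Icc (0:ℝ) 1)) :=
    (contA _).integrableOn_Icc
  have i2 : Integrable (fun t => max (((N:ℝ)-k)/N - t) 0) (volume.restrict (Set.Icc (0:ℝ) 1)) :=
    (contB _).integrableOn_Icc
  have i3 : Integrable (fun _ : ℝ => ((N:ℝ)-k) * (2*k-N)/N^2) (volume.restrict (Set.Icc (0:ℝ) 1)) :=
    integrable_const _
  have e1 : (∫ t in Set.Icc (0:ℝ) 1, phiF N k t)
      = (∫ t in Set.Icc (0:ℝ) 1, (max (t - (k:ℝ)/N) 0 + max (((N:ℝ)-k)/N - t) 0))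
        + ∫ _t in Set.Icc (0:ℝ) 1, (((N:ℝ)-k) * (2*k-N)/N^2) :=
    MeasureTheory.integral_add (i1.add i2) i3
  have e2 : (∫ t in Set.Icc (0:ℝ) 1, (max (t - (k:ℝ)/N) 0 + max (((N:ℝ)-k)/N - t) 0))
      = (∫ t in Set.Icc (0:ℝ) 1, max (t - (k:ℝ)/N) 0)
        + ∫ t in Set.Icc (0:ℝ) 1, max (((N:ℝ)-k)/N - t) 0 :=
    MeasureTheory.integral_add i1 i2
  rw [e1, e2, integral_max_sub _ hkN hkN1, integral_max_sub' _ huN huN1,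
    MeasureTheory.integral_const]
  simp only [MeasurableSet.univ, measureReal_restrict_apply, Set.univ_inter, Real.volume_real_Icc,
    sub_zero, ENNReal.toReal_ofReal (zero_le_one' ℝ), one_smul]
  norm_num
  field_simp
  ring

noncomputable def Stil (N k : ℕ) (x : Fin N → ℝ) : ℝ := ∑ j : Fin N, phiF N k (x j)

lemma lag_decomp (N : ℕ) (F : ℕ → ℕ → ℝ≥0∞) :
    ∑ p ∈ (Finset.range N ×ˢ Finset.range N).filter (fun p => p.1 < p.2), F p.1 p.2
      = ∑ k ∈ Finset.Ico 1 N, ∑ i ∈ Finset.range (N - k), F i (i + k) := by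
  rw [show (∑ k ∈ Finset.Ico 1 N, ∑ i ∈ Finset.range (N - k), F i (i + k))
      = ∑ q ∈ (Finset.Ico 1 N).sigma (fun k => Finset.range (N - k)), F q.2 (q.2 + q.1)
    from Finset.sum_sigma' _ _ _]
  apply Finset.sum_nbij' (i := fun p => (⟨p.2 - p.1, p.1⟩ : Σ _ : ℕ, ℕ))
    (j := fun q => (q.2, q.2 + q.1))
  · intro p hp
    simp only [Finset.mem_filter, Finset.mem_product, Finset.mem_range] at hp
    simp only [Finset.mem_sigma, Finset.mem_Ico, Finset.mem_range]
    omega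
  · intro q hq
    simp only [Finset.mem_sigma, Finset.mem_Ico, Finset.mem_range] at hq
    simp only [Finset.mem_filter, Finset.mem_product, Finset.mem_range]
    omega
  · intro p hp
    simp only [Finset.mem_filter, Finset.mem_product, Finset.mem_range] at hp
    simp [Prod.ext_iff]
    try omega
  · intro q hq
    simp only [Finset.mem_sigma, Finset.mem_Ico, Finset.mem_range] at hq
    simp [Sigma.ext_iff]
    try omega
  · intro p hp
    simp only [Finset.mem_filter, Finset.mem_product, Finset.mem_range] at hp
    have h : p.1 + (p.2 - p.1) = p.2 := by omega
    simp [h]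

-- symmetric off-diagonal double sum = 2 * lag sums
lemma pair_decomp (N : ℕ) (F : ℕ → ℕ → ℝ≥0∞) (hsym : ∀ a b, F a b = F b a) :
    (∑ a ∈ Finset.range N, ∑ b ∈ Finset.range N, if a ≠ b then F a b else 0)
      = ∑ k ∈ Finset.Ico 1 N, 2 * ∑ i ∈ Finset.range (N - k), F i (i + k) := by
  have h0 : (∑ a ∈ Finset.range N, ∑ b ∈ Finset.range N, if a ≠ b then F a b else 0)
      = ∑ p ∈ (Finset.range N ×ˢ Finset.range N), if p.1 ≠ p.2 then F p.1 p.2 else 0 := by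
    rw [Finset.sum_product]
  rw [h0, ← Finset.sum_filter]
  have hsplit : (Finset.range N ×ˢ Finset.range N).filter (fun p => p.1 ≠ p.2)
      = ((Finset.range N ×ˢ Finset.range N).filter (fun p => p.1 < p.2))
        ∪ ((Finset.range N ×ˢ Finset.range N).filter (fun p => p.2 < p.1)) := by
    ext p
    simp only [Finset.mem_filter, Finset.mem_union, Finset.mem_product, Finset.mem_range, ne_eq]
    omega
  have hdisj : Disjoint ((Finset.range N ×ˢ Finset.range N).filter (fun p => p.1 < p.2))
      ((Finset.range N ×ˢ Finset.range N).filter (fun p => p.2 < p.1)) := by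
    rw [Finset.disjoint_filter]
    intro p _ h1
    omega
  rw [hsplit, Finset.sum_union hdisj]
  have hswap : ∑ p ∈ (Finset.range N ×ˢ Finset.range N).filter (fun p => p.2 < p.1), F p.1 p.2
      = ∑ p ∈ (Finset.range N ×ˢ Finset.range N).filter (fun p => p.1 < p.2), F p.1 p.2 := by
    apply Finset.sum_nbij' (i := fun p => (p.2, p.1)) (j := fun p => (p.2, p.1))
    · intro p hp; simp only [Finset.mem_filter, Finset.mem_product, Finset.mem_range] at *; omega
    · intro p hp; simp only [Finset.mem_filter, Finset.mem_product, Finset.mem_range] at *; omega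
    · intro p _; rfl
    · intro p _; rfl
    · intro p _; exact hsym _ _
  rw [hswap, ← two_mul, lag_decomp, Finset.mul_sum]


lemma cs_real {ι : Type*} (s : Finset ι) (d : ι → ℝ) (hd : ∀ i ∈ s, 0 < d i) :
    (s.card : ℝ)^2 ≤ (∑ i ∈ s, d i) * ∑ i ∈ s, (d i)⁻¹ := by
  have h := Finset.sum_mul_sq_le_sq_mul_sq s (fun i => Real.sqrt (d i))
    (fun i => Real.sqrt (d i)⁻¹)
  have h1 : ∀ i ∈ s, Real.sqrt (d i) * Real.sqrt (d i)⁻¹ = 1 := by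
    intro i hi
    rw [← Real.sqrt_mul (hd i hi).le, mul_inv_cancel₀ (hd i hi).ne', Real.sqrt_one]
  rw [Finset.sum_congr rfl h1, Finset.sum_const, nsmul_eq_mul, mul_one] at h
  calc (s.card : ℝ)^2 ≤ (∑ i ∈ s, Real.sqrt (d i) ^ 2) * ∑ i ∈ s, Real.sqrt (d i)⁻¹ ^ 2 := h
    _ = (∑ i ∈ s, d i) * ∑ i ∈ s, (d i)⁻¹ := by
        congr 1
        · exact Finset.sum_congr rfl fun i hi => Real.sq_sqrt (hd i hi).le
        · exact Finset.sum_congr rfl fun i hi => Real.sq_sqrt (inv_nonneg.2 (hd i hi).le)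

lemma cs_ennreal {n : ℕ} (hn : 0 < n) (d : ℕ → ℝ) (S : ℝ)
    (hdS : (∑ i ∈ Finset.range n, d i) ≤ S) :
    (n : ℝ≥0∞)^2 * (ENNReal.ofReal S)⁻¹ ≤ ∑ i ∈ Finset.range n, (ENNReal.ofReal (d i))⁻¹ := by
  by_cases hpos : ∀ i ∈ Finset.range n, 0 < d i
  · have hS : 0 < S :=
      lt_of_lt_of_le (Finset.sum_pos hpos ⟨0, Finset.mem_range.2 hn⟩) hdS
    have hcs : (n:ℝ)^2 / S ≤ ∑ i ∈ Finset.range n, (d i)⁻¹ := by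
      rw [div_le_iff₀ hS]
      have hinv : (0:ℝ) ≤ ∑ i ∈ Finset.range n, (d i)⁻¹ :=
        Finset.sum_nonneg fun i hi => inv_nonneg.2 (hpos i hi).le
      calc (n:ℝ)^2 = ((Finset.range n).card : ℝ)^2 := by rw [Finset.card_range]
        _ ≤ (∑ i ∈ Finset.range n, d i) * ∑ i ∈ Finset.range n, (d i)⁻¹ := cs_real _ _ hpos
        _ ≤ S * ∑ i ∈ Finset.range n, (d i)⁻¹ := mul_le_mul_of_nonneg_right hdS hinv
        _ = (∑ i ∈ Finset.range n, (d i)⁻¹) * S := mul_comm _ _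
    calc (n:ℝ≥0∞)^2 * (ENNReal.ofReal S)⁻¹
        = ENNReal.ofReal ((n:ℝ)^2 / S) := by
          rw [ENNReal.ofReal_div_of_pos hS, div_eq_mul_inv]
          congr 1
          rw [ENNReal.ofReal_pow (Nat.cast_nonneg n), ENNReal.ofReal_natCast]
      _ ≤ ENNReal.ofReal (∑ i ∈ Finset.range n, (d i)⁻¹) := ENNReal.ofReal_le_ofReal hcs
      _ = ∑ i ∈ Finset.range n, ENNReal.ofReal ((d i)⁻¹) :=
          ENNReal.ofReal_sum_of_nonneg fun i hi => inv_nonneg.2 (hpos i hi).le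
      _ = ∑ i ∈ Finset.range n, (ENNReal.ofReal (d i))⁻¹ :=
          Finset.sum_congr rfl fun i hi => ENNReal.ofReal_inv_of_pos (hpos i hi)
  · push_neg at hpos
    obtain ⟨i0, hi0, hle⟩ := hpos
    have htop : (ENNReal.ofReal (d i0))⁻¹ = ⊤ := by
      rw [ENNReal.ofReal_eq_zero.2 hle]
      simp
    have : ∑ i ∈ Finset.range n, (ENNReal.ofReal (d i))⁻¹ = ⊤ :=
      ENNReal.sum_eq_top.2 ⟨i0, hi0, htop⟩
    rw [this]
    exact le_top

lemma inv_lintegral_le {α : Type*} [MeasurableSpace α] (μ : Measure α) [IsProbabilityMeasure μ]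
    (f : α → ℝ≥0∞) (hf : AEMeasurable f μ) :
    (∫⁻ a, f a ∂μ)⁻¹ ≤ ∫⁻ a, (f a)⁻¹ ∂μ := by
  by_cases hz : ∫⁻ a, (f a)⁻¹ ∂μ = ⊤
  · rw [hz]; exact le_top
  by_cases hT : ∫⁻ a, f a ∂μ = ⊤
  · rw [hT]; simp
  have hfin : ∀ᵐ a ∂μ, f a ≠ ⊤ := by
    filter_upwards [ae_lt_top' hf hT] with a ha using ha.ne
  have hpos : ∀ᵐ a ∂μ, f a ≠ 0 := by
    filter_upwards [ae_lt_top' hf.inv hz] with a ha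
    intro h0
    rw [Pi.inv_apply, h0] at ha
    simp at ha
  have hone : (fun a => f a ^ ((1:ℝ)/2) * (f a)⁻¹ ^ ((1:ℝ)/2)) =ᵐ[μ] fun _ => 1 := by
    filter_upwards [hfin, hpos] with a ha hb
    rw [← ENNReal.mul_rpow_of_nonneg _ _ (by norm_num : (0:ℝ) ≤ 1/2),
      ENNReal.mul_inv_cancel hb ha, ENNReal.one_rpow]
  have key := ENNReal.lintegral_mul_norm_pow_le hf hf.inv
    (by norm_num : (0:ℝ) ≤ 1/2) (by norm_num : (0:ℝ) ≤ 1/2) (by norm_num)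
  simp only [Pi.inv_apply] at key
  rw [lintegral_congr_ae hone, lintegral_one, measure_univ] at key
  -- key : 1 ≤ (∫⁻ f)^(1/2) * (∫⁻ f⁻¹)^(1/2)
  have key2 : (1:ℝ≥0∞) ≤ (∫⁻ a, f a ∂μ) * ∫⁻ a, (f a)⁻¹ ∂μ := by
    have := ENNReal.rpow_le_rpow key (by norm_num : (0:ℝ) ≤ 2)
    rw [ENNReal.one_rpow, ENNReal.mul_rpow_of_nonneg _ _ (by norm_num : (0:ℝ) ≤ 2),
      ← ENNReal.rpow_mul, ← ENNReal.rpow_mul] at this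
    norm_num at this
    convert this using 2 <;> norm_num [ENNReal.rpow_one]
  by_cases h0 : ∫⁻ a, f a ∂μ = 0
  · rw [h0] at key2
    simp at key2
  calc (∫⁻ a, f a ∂μ)⁻¹ = (∫⁻ a, f a ∂μ)⁻¹ * 1 := (mul_one _).symm
    _ ≤ (∫⁻ a, f a ∂μ)⁻¹ * ((∫⁻ a, f a ∂μ) * ∫⁻ a, (f a)⁻¹ ∂μ) := mul_le_mul_right key2 _
    _ = ((∫⁻ a, f a ∂μ)⁻¹ * (∫⁻ a, f a ∂μ)) * ∫⁻ a, (f a)⁻¹ ∂μ := (mul_assoc _ _ _).symm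
    _ = ∫⁻ a, (f a)⁻¹ ∂μ := by rw [ENNReal.inv_mul_cancel h0 hT, one_mul]

lemma sum_lag_le_phiSum (N k : ℕ) (hkN : k < N) (z : ℕ → ℝ) :
    ∑ i ∈ Finset.range (N - k), (z (i + k) - z i) ≤ ∑ j ∈ Finset.range N, phiF N k (z j) := by
  have hN : 0 < N := lt_of_le_of_lt (Nat.zero_le k) hkN
  have hN' : (0:ℝ) < N := by exact_mod_cast hN
  set u' : ℝ := (k:ℝ)/N with hu'
  set u : ℝ := ((N:ℝ)-k)/N with hu
  have hsub1 : Finset.Ico k N ⊆ Finset.range N := by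
    intro j hj
    simp only [Finset.mem_Ico] at hj
    exact Finset.mem_range.2 hj.2
  have hsub2 : Finset.range (N - k) ⊆ Finset.range N := by
    intro j hj
    simp only [Finset.mem_range] at *
    omega
  have h1 : ∑ i ∈ Finset.range (N - k), z (i + k)
      ≤ ((N-k : ℕ):ℝ) * u' + ∑ j ∈ Finset.range N, max (z j - u') 0 := by
    have step1 : ∑ i ∈ Finset.range (N - k), z (i + k)
        ≤ ∑ i ∈ Finset.range (N - k), (u' + max (z (i + k) - u') 0) :=
      Finset.sum_le_sum fun i _ => by
        have := le_max_left (z (i + k) - u') 0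
        linarith
    have step2 : ∑ i ∈ Finset.range (N - k), (u' + max (z (i + k) - u') 0)
        = ((N-k : ℕ):ℝ) * u' + ∑ i ∈ Finset.range (N - k), max (z (i + k) - u') 0 := by
      rw [Finset.sum_add_distrib, Finset.sum_const, Finset.card_range, nsmul_eq_mul]
    have step3 : ∑ i ∈ Finset.range (N - k), max (z (i + k) - u') 0
        = ∑ j ∈ Finset.Ico k N, max (z j - u') 0 := by
      rw [Finset.sum_Ico_eq_sum_range]
      apply Finset.sum_congr rfl
      intro i _
      rw [add_comm k i]
    have step4 : ∑ j ∈ Finset.Ico k N, max (z j - u') 0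
        ≤ ∑ j ∈ Finset.range N, max (z j - u') 0 :=
      Finset.sum_le_sum_of_subset_of_nonneg hsub1 fun j _ _ => le_max_right _ _
    linarith
  have h2 : ((N-k : ℕ):ℝ) * u - ∑ j ∈ Finset.range N, max (u - z j) 0
      ≤ ∑ i ∈ Finset.range (N - k), z i := by
    have step1 : ∑ i ∈ Finset.range (N - k), (u - max (u - z i) 0)
        ≤ ∑ i ∈ Finset.range (N - k), z i :=
      Finset.sum_le_sum fun i _ => by
        have := le_max_left (u - z i) 0
        linarith
    have step2 : ∑ i ∈ Finset.range (N - k), (u - max (u - z i) 0)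
        = ((N-k : ℕ):ℝ) * u - ∑ i ∈ Finset.range (N - k), max (u - z i) 0 := by
      rw [Finset.sum_sub_distrib, Finset.sum_const, Finset.card_range, nsmul_eq_mul]
    have step3 : ∑ i ∈ Finset.range (N - k), max (u - z i) 0
        ≤ ∑ j ∈ Finset.range N, max (u - z j) 0 :=
      Finset.sum_le_sum_of_subset_of_nonneg hsub2 fun j _ _ => le_max_right _ _
    linarith
  have hconst : ∑ _j ∈ Finset.range N, ((N:ℝ)-k)*(2*k-N)/N^2
      = ((N-k : ℕ):ℝ) * (u' - u) := by
    rw [Finset.sum_const, Finset.card_range, nsmul_eq_mul, Nat.cast_sub hkN.le, hu, hu']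
    field_simp
    ring
  have hexpand : ∑ j ∈ Finset.range N, phiF N k (z j)
      = (∑ j ∈ Finset.range N, max (z j - u') 0) + (∑ j ∈ Finset.range N, max (u - z j) 0)
        + ∑ _j ∈ Finset.range N, ((N:ℝ)-k)*(2*k-N)/N^2 := by
    unfold phiF
    rw [← Finset.sum_add_distrib, ← Finset.sum_add_distrib]
  have hsplit : ∑ i ∈ Finset.range (N - k), (z (i + k) - z i)
      = (∑ i ∈ Finset.range (N - k), z (i + k)) - ∑ i ∈ Finset.range (N - k), z i :=
    Finset.sum_sub_distrib _ _
  rw [hexpand, hconst, hsplit]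
  linarith

noncomputable def zhat (N : ℕ) (y : Fin N → ℝ) : ℕ → ℝ :=
  fun j => if h : j < N then y ⟨j, h⟩ else 0

lemma zhat_val (N : ℕ) (y : Fin N → ℝ) (j : Fin N) : zhat N y j.val = y j := by
  unfold zhat
  rw [dif_pos j.isLt]

lemma coul1_comp_perm (N : ℕ) (x : Fin N → ℝ) (σ : Equiv.Perm (Fin N)) :
    coul1 N (x ∘ σ) = coul1 N x := by
  unfold coul1
  calc ∑ i : Fin N, ∑ j : Fin N, (if i ≠ j then (ENNReal.ofReal |(x ∘ σ) i - (x ∘ σ) j|)⁻¹ else 0)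
      = ∑ i : Fin N, ∑ j : Fin N,
          (if σ i ≠ σ j then (ENNReal.ofReal |x (σ i) - x (σ j)|)⁻¹ else 0) := by
        simp only [ne_eq, EmbeddingLike.apply_eq_iff_eq, Function.comp_apply]
    _ = ∑ i : Fin N, ∑ j : Fin N, (if σ i ≠ j then (ENNReal.ofReal |x (σ i) - x j|)⁻¹ else 0) := by
        apply Finset.sum_congr rfl
        intro i _
        exact Equiv.sum_comp σ (fun j => if σ i ≠ j then (ENNReal.ofReal |x (σ i) - x j|)⁻¹ else 0)
    _ = ∑ i : Fin N, ∑ j : Fin N, (if i ≠ j then (ENNReal.ofReal |x i - x j|)⁻¹ else 0) :=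
        Equiv.sum_comp σ (fun a => ∑ j : Fin N, (if a ≠ j then (ENNReal.ofReal |x a - x j|)⁻¹ else 0))

lemma Stil_comp_perm (N k : ℕ) (x : Fin N → ℝ) (σ : Equiv.Perm (Fin N)) :
    Stil N k (x ∘ σ) = Stil N k x := by
  unfold Stil
  exact Equiv.sum_comp σ (fun j => phiF N k (x j))

lemma coul1_eq_range (N : ℕ) (y : Fin N → ℝ) :
    coul1 N y = ∑ a ∈ Finset.range N, ∑ b ∈ Finset.range N,
      if a ≠ b then (ENNReal.ofReal |zhat N y a - zhat N y b|)⁻¹ else 0 := by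
  unfold coul1
  rw [← Fin.sum_univ_eq_sum_range (fun a => ∑ b ∈ Finset.range N,
    if a ≠ b then (ENNReal.ofReal |zhat N y a - zhat N y b|)⁻¹ else 0) N]
  apply Finset.sum_congr rfl
  intro i _
  rw [← Fin.sum_univ_eq_sum_range (fun b =>
    if (i:ℕ) ≠ b then (ENNReal.ofReal |zhat N y i - zhat N y b|)⁻¹ else 0) N]
  apply Finset.sum_congr rfl
  intro j _
  rw [zhat_val, zhat_val]
  simp only [ne_eq, Fin.val_inj]

lemma Stil_eq_range (N k : ℕ) (y : Fin N → ℝ) :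
    Stil N k y = ∑ j ∈ Finset.range N, phiF N k (zhat N y j) := by
  unfold Stil
  rw [← Fin.sum_univ_eq_sum_range (fun j => phiF N k (zhat N y j)) N]
  exact Finset.sum_congr rfl fun j _ => by rw [zhat_val]

lemma main_pw (N : ℕ) (x : Fin N → ℝ) :
    ∑ k ∈ Finset.Ico 1 N, 2 * (((N - k : ℕ)) : ℝ≥0∞)^2 * (ENNReal.ofReal (Stil N k x))⁻¹
      ≤ coul1 N x := by
  set σ := Tuple.sort x with hσ
  set y := x ∘ σ with hy
  have hmono : Monotone y := Tuple.monotone_sort x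
  have hcx : coul1 N x = coul1 N y := (coul1_comp_perm N x σ).symm
  have hSx : ∀ k, Stil N k x = Stil N k y := fun k => (Stil_comp_perm N k x σ).symm
  rw [hcx, coul1_eq_range, pair_decomp N _ (fun a b => by rw [abs_sub_comm])]
  apply Finset.sum_le_sum
  intro k hk
  rw [Finset.mem_Ico] at hk
  rw [hSx k]
  have habs : ∀ i ∈ Finset.range (N - k),
      (ENNReal.ofReal |zhat N y i - zhat N y (i+k)|)⁻¹
        = (ENNReal.ofReal (zhat N y (i+k) - zhat N y i))⁻¹ := by
    intro i hi
    rw [Finset.mem_range] at hi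
    have hik : i + k < N := by omega
    have hle : zhat N y i ≤ zhat N y (i + k) := by
      have h1 : zhat N y i = y ⟨i, by omega⟩ := by unfold zhat; rw [dif_pos]
      have h2 : zhat N y (i+k) = y ⟨i+k, hik⟩ := by unfold zhat; rw [dif_pos]
      rw [h1, h2]
      apply hmono
      simp only [Fin.mk_le_mk]
      omega
    rw [abs_sub_comm, abs_of_nonneg (by linarith)]
  rw [Finset.sum_congr rfl habs, mul_assoc]
  apply mul_le_mul_right
  have hdS : (∑ i ∈ Finset.range (N - k), (zhat N y (i+k) - zhat N y i)) ≤ Stil N k y := by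
    rw [Stil_eq_range]
    exact sum_lag_le_phiSum N k hk.2 (zhat N y)
  exact cs_ennreal (by omega) (fun i => zhat N y (i+k) - zhat N y i) (Stil N k y) hdS

-- the configuration map
noncomputable def confF (N : ℕ) (t : ℝ) : Fin N → ℝ := fun i => Int.fract (t + (i.val : ℝ) / N)

lemma conf_formula (N : ℕ) (hN : 0 < N) (t : ℝ) (i : Fin N) :
    Int.fract (t + (i.val : ℝ) / N)
      = ((((⌊(N:ℝ) * t⌋ + i.val) % (N:ℤ) : ℤ) : ℝ) + Int.fract ((N:ℝ) * t)) / N := by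
  have hN' : (0:ℝ) < N := by exact_mod_cast hN
  set M : ℤ := ⌊(N:ℝ) * t⌋ with hM
  set θ : ℝ := Int.fract ((N:ℝ) * t) with hθ
  have hNt : (N:ℝ) * t = (M:ℝ) + θ := (Int.floor_add_fract _).symm
  have ht : t = ((M:ℝ) + θ) / N := by
    field_simp at hNt ⊢
    linarith
  set q : ℤ := (M + i.val) / (N:ℤ) with hq
  set r : ℤ := (M + i.val) % (N:ℤ) with hr
  have hdiv : (N:ℤ) * q + r = M + i.val := Int.mul_ediv_add_emod _ _
  have hsum : t + (i.val:ℝ)/N = (q:ℝ) + ((r:ℝ) + θ)/N := by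
    rw [ht]
    have : ((M:ℝ) + i.val) = (N:ℝ) * q + r := by exact_mod_cast congrArg (fun z : ℤ => (z:ℝ)) hdiv.symm
    field_simp
    linarith
  rw [hsum, Int.fract_intCast_add]
  have hr0 : (0:ℤ) ≤ r := Int.emod_nonneg _ (by exact_mod_cast hN.ne')
  have hrN : r < N := Int.emod_lt_of_pos _ (by exact_mod_cast hN)
  have hθ0 : 0 ≤ θ := Int.fract_nonneg _
  have hθ1 : θ < 1 := Int.fract_lt_one _
  rw [Int.fract_eq_self.2]
  constructor
  · apply div_nonneg _ hN'.le
    have : (0:ℝ) ≤ (r:ℝ) := by exact_mod_cast hr0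
    linarith
  · rw [div_lt_one hN']
    have : (r:ℝ) ≤ (N:ℝ) - 1 := by
      have : r ≤ (N:ℤ) - 1 := by omega
      exact_mod_cast this
    linarith

lemma conf_pair_dist (N : ℕ) (hN : 0 < N) (t : ℝ) (i j : Fin N) :
    |Int.fract (t + (i.val : ℝ) / N) - Int.fract (t + (j.val : ℝ) / N)|
      = |(((⌊(N:ℝ) * t⌋ + i.val) % (N:ℤ) : ℤ) : ℝ) - (((⌊(N:ℝ) * t⌋ + j.val) % (N:ℤ) : ℤ) : ℝ)| / N := by
  have hN' : (0:ℝ) < N := by exact_mod_cast hN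
  rw [conf_formula N hN t i, conf_formula N hN t j, div_sub_div_same, abs_div, abs_of_pos hN']
  congr 2
  ring

lemma fin_add_val_int (N : ℕ) (hN : 0 < N) (M : ℤ) (i : Fin N) :
    haveI : NeZero N := ⟨hN.ne'⟩
    (((⟨(M % N).toNat % N, Nat.mod_lt _ hN⟩ : Fin N) + i).val : ℤ) = (M + i.val) % (N:ℤ) := by
  haveI : NeZero N := ⟨hN.ne'⟩
  have hmn : (0:ℤ) ≤ M % N := Int.emod_nonneg _ (by exact_mod_cast hN.ne')
  have htn : ((M % (N:ℤ)).toNat : ℤ) = M % N := Int.toNat_of_nonneg hmn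
  rw [Fin.val_add]
  push_cast [Int.natCast_mod]
  rw [htn]
  conv_rhs => rw [Int.add_emod]
  conv_lhs => rw [Int.add_emod]
  simp [Int.emod_emod_of_dvd]

lemma coul1_conf (N : ℕ) (hN : 2 ≤ N) (t : ℝ) :
    coul1 N (fun i : Fin N => Int.fract (t + (i.val:ℝ)/N))
      = ∑ k ∈ Finset.Ico 1 N, 2 * (((N - k : ℕ)) : ℝ≥0∞) * (ENNReal.ofReal ((k:ℝ)/N))⁻¹ := by
  have hN0 : 0 < N := by omega
  haveI : NeZero N := ⟨by omega⟩
  set M : ℤ := ⌊(N:ℝ)*t⌋ with hM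
  set c : Fin N := ⟨(M % N).toNat % N, Nat.mod_lt _ hN0⟩ with hc
  have hterm : ∀ i : Fin N, ∀ j : Fin N,
      |Int.fract (t + (i.val:ℝ)/N) - Int.fract (t + (j.val:ℝ)/N)|
        = |(((c+i).val : ℕ):ℝ) - (((c+j).val : ℕ):ℝ)| / N := by
    intro i j
    rw [conf_pair_dist N hN0 t i j]
    have e1 : ((((⌊(N:ℝ) * t⌋ + i.val) % (N:ℤ) : ℤ)) : ℝ) = (((c+i).val : ℕ):ℝ) := by
      rw [← fin_add_val_int N hN0 M i]
      push_cast
      ring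
    have e2 : ((((⌊(N:ℝ) * t⌋ + j.val) % (N:ℤ) : ℤ)) : ℝ) = (((c+j).val : ℕ):ℝ) := by
      rw [← fin_add_val_int N hN0 M j]
      push_cast
      ring
    rw [e1, e2]
  unfold coul1
  have step1 : (∑ i : Fin N, ∑ j : Fin N, if i ≠ j then
      (ENNReal.ofReal |Int.fract (t + (i.val:ℝ)/N) - Int.fract (t + (j.val:ℝ)/N)|)⁻¹ else 0)
      = ∑ i : Fin N, ∑ j : Fin N, (if c+i ≠ c+j then
          (ENNReal.ofReal (|(((c+i).val : ℕ):ℝ) - (((c+j).val : ℕ):ℝ)| / N))⁻¹ else 0) := by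
    apply Finset.sum_congr rfl
    intro i _
    apply Finset.sum_congr rfl
    intro j _
    rw [hterm i j]
    by_cases h : i = j
    · subst h
      simp
    · rw [if_pos (show ¬i = j from h), if_pos (show ¬c + i = c + j from
        fun hc' => h (add_left_cancel hc'))]
  rw [step1]
  have step2 : (∑ i : Fin N, ∑ j : Fin N, (if c+i ≠ c+j then
      (ENNReal.ofReal (|(((c+i).val : ℕ):ℝ) - (((c+j).val : ℕ):ℝ)| / N))⁻¹ else 0))
      = ∑ a : Fin N, ∑ b : Fin N, (if a ≠ b then
          (ENNReal.ofReal (|((a.val : ℕ):ℝ) - ((b.val : ℕ):ℝ)| / N))⁻¹ else 0) := by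
    have inner : ∀ a : Fin N, (∑ j : Fin N, (if a ≠ c+j then
        (ENNReal.ofReal (|((a.val : ℕ):ℝ) - (((c+j).val : ℕ):ℝ)| / N))⁻¹ else 0))
        = ∑ b : Fin N, (if a ≠ b then
          (ENNReal.ofReal (|((a.val : ℕ):ℝ) - ((b.val : ℕ):ℝ)| / N))⁻¹ else 0) :=
      fun a => Equiv.sum_comp (Equiv.addLeft c) (fun b => if a ≠ b then
        (ENNReal.ofReal (|((a.val : ℕ):ℝ) - ((b.val : ℕ):ℝ)| / N))⁻¹ else 0)
    calc (∑ i : Fin N, ∑ j : Fin N, (if c+i ≠ c+j then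
        (ENNReal.ofReal (|(((c+i).val : ℕ):ℝ) - (((c+j).val : ℕ):ℝ)| / N))⁻¹ else 0))
        = ∑ i : Fin N, ∑ b : Fin N, (if c+i ≠ b then
            (ENNReal.ofReal (|(((c+i).val : ℕ):ℝ) - ((b.val : ℕ):ℝ)| / N))⁻¹ else 0) :=
          Finset.sum_congr rfl fun i _ => inner (c+i)
      _ = ∑ a : Fin N, ∑ b : Fin N, (if a ≠ b then
            (ENNReal.ofReal (|((a.val : ℕ):ℝ) - ((b.val : ℕ):ℝ)| / N))⁻¹ else 0) :=
          Equiv.sum_comp (Equiv.addLeft c) (fun a => ∑ b : Fin N, (if a ≠ b then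
            (ENNReal.ofReal (|((a.val : ℕ):ℝ) - ((b.val : ℕ):ℝ)| / N))⁻¹ else 0))
  rw [step2]
  have step3 : (∑ a : Fin N, ∑ b : Fin N, (if a ≠ b then
      (ENNReal.ofReal (|((a.val : ℕ):ℝ) - ((b.val : ℕ):ℝ)| / N))⁻¹ else 0))
      = ∑ a ∈ Finset.range N, ∑ b ∈ Finset.range N, (if a ≠ b then
          (ENNReal.ofReal (|(a:ℝ) - (b:ℝ)| / N))⁻¹ else 0) := by
    rw [← Fin.sum_univ_eq_sum_range (fun a => ∑ b ∈ Finset.range N, (if a ≠ b then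
      (ENNReal.ofReal (|(a:ℝ) - (b:ℝ)| / N))⁻¹ else 0)) N]
    apply Finset.sum_congr rfl
    intro a _
    rw [← Fin.sum_univ_eq_sum_range (fun b => (if (a:ℕ) ≠ b then
      (ENNReal.ofReal (|((a:ℕ):ℝ) - (b:ℝ)| / N))⁻¹ else 0)) N]
    apply Finset.sum_congr rfl
    intro b _
    simp only [ne_eq, Fin.val_inj]
  rw [step3, pair_decomp N _ (fun a b => by rw [abs_sub_comm])]
  apply Finset.sum_congr rfl
  intro k hk
  rw [Finset.mem_Ico] at hk
  have hin : ∀ i ∈ Finset.range (N - k),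
      (ENNReal.ofReal (|(i:ℝ) - ((i+k:ℕ):ℝ)| / N))⁻¹ = (ENNReal.ofReal ((k:ℝ)/N))⁻¹ := by
    intro i _
    congr 2
    push_cast
    rw [abs_of_nonpos (by linarith [Nat.cast_nonneg (α := ℝ) k])]
    ring
  rw [Finset.sum_congr rfl hin, Finset.sum_const, Finset.card_range, nsmul_eq_mul, mul_assoc]

lemma coul1_measurable (N : ℕ) : Measurable (coul1 N) := by
  unfold coul1
  apply Finset.measurable_sum
  intro i _
  apply Finset.measurable_sum
  intro j _
  by_cases h : i = j
  · simp [h]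
  · simp only [h, ne_eq, not_false_iff, if_true]
    exact (((measurable_pi_apply i).sub (measurable_pi_apply j)).abs.ennreal_ofReal).inv

lemma conf_measurable (N : ℕ) :
    Measurable (fun t : ℝ => fun i : Fin N => Int.fract (t + (i.val : ℝ) / N)) :=
  measurable_pi_lambda _ fun i => measurable_fract.comp (measurable_id.add_const _)

lemma lhs_eval (N : ℕ) (hN : 2 ≤ N) :
    ∫⁻ x, coul1 N x
        ∂((volume.restrict (Set.Icc (0:ℝ) 1)).map
          (fun t => fun i : Fin N => Int.fract (t + (i.val : ℝ) / N)))
      = ∑ k ∈ Finset.Ico 1 N, 2 * (((N - k : ℕ)) : ℝ≥0∞) * (ENNReal.ofReal ((k:ℝ)/N))⁻¹ := by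
  rw [MeasureTheory.lintegral_map (coul1_measurable N) (conf_measurable N)]
  rw [lintegral_congr (fun t => coul1_conf N hN t)]
  rw [lintegral_const, Measure.restrict_apply MeasurableSet.univ, Set.univ_inter, Real.volume_Icc]
  norm_num

lemma Stil_measurable (N k : ℕ) : Measurable (Stil N k) := by
  unfold Stil
  exact Finset.measurable_sum _ fun j _ =>
    (phiF_continuous N k).measurable.comp (measurable_pi_apply j)

lemma lint_Stil (N k : ℕ) (hN0 : 0 < N) (hk : k ≤ N) {γ : Measure (Fin N → ℝ)}
    [IsProbabilityMeasure γ]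
    (hmarg : ∀ i : Fin N, γ.map (fun x => x i) = volume.restrict (Set.Icc (0:ℝ) 1)) :
    ∫⁻ x, ENNReal.ofReal (Stil N k x) ∂γ = ENNReal.ofReal ((k:ℝ)*((N:ℝ)-k)/N) := by
  have hphi_m : Measurable (phiF N k) := (phiF_continuous N k).measurable
  have hint : ∀ j : Fin N, ∫⁻ x, ENNReal.ofReal (phiF N k (x j)) ∂γ
      = ENNReal.ofReal ((k:ℝ)*((N:ℝ)-k)/N^2) := by
    intro j
    have hm := MeasureTheory.lintegral_map (μ := γ) (f := fun t => ENNReal.ofReal (phiF N k t))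
      (hphi_m.ennreal_ofReal) (measurable_pi_apply j)
    rw [← hm, hmarg j,
      ← ofReal_integral_eq_lintegral_ofReal ((phiF_continuous N k).integrableOn_Icc)
        (ae_of_all _ (phiF_nonneg N k hN0 hk)),
      integral_phiF N k hN0 hk]
  calc ∫⁻ x, ENNReal.ofReal (Stil N k x) ∂γ
      = ∫⁻ x, ∑ j : Fin N, ENNReal.ofReal (phiF N k (x j)) ∂γ :=
        lintegral_congr fun x =>
          ENNReal.ofReal_sum_of_nonneg fun j _ => phiF_nonneg N k hN0 hk _
    _ = ∑ j : Fin N, ∫⁻ x, ENNReal.ofReal (phiF N k (x j)) ∂γ :=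
        lintegral_finset_sum _ fun j _ =>
          (hphi_m.comp (measurable_pi_apply j)).ennreal_ofReal
    _ = ∑ _j : Fin N, ENNReal.ofReal ((k:ℝ)*((N:ℝ)-k)/N^2) :=
        Finset.sum_congr rfl fun j _ => hint j
    _ = (N : ℝ≥0∞) * ENNReal.ofReal ((k:ℝ)*((N:ℝ)-k)/N^2) := by
        rw [Finset.sum_const, Finset.card_univ, Fintype.card_fin, nsmul_eq_mul]
    _ = ENNReal.ofReal ((k:ℝ)*((N:ℝ)-k)/N) := by
        rw [← ENNReal.ofReal_natCast N, ← ENNReal.ofReal_mul (Nat.cast_nonneg N)]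
        congr 1
        have hN' : (0:ℝ) < N := by exact_mod_cast hN0
        field_simp

lemma perk (N k : ℕ) (hk1 : 1 ≤ k) (hk2 : k < N) :
    2 * (((N - k : ℕ)) : ℝ≥0∞)^2 * (ENNReal.ofReal ((k:ℝ)*((N:ℝ)-k)/N))⁻¹
      = 2 * (((N - k : ℕ)) : ℝ≥0∞) * (ENNReal.ofReal ((k:ℝ)/N))⁻¹ := by
  have hN0 : 0 < N := by omega
  have hN' : (0:ℝ) < N := by exact_mod_cast hN0
  have hk' : (0:ℝ) < k := by exact_mod_cast hk1
  have hb0 : (((N - k : ℕ)) : ℝ≥0∞) ≠ 0 := by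
    simp only [ne_eq, Nat.cast_eq_zero]
    omega
  have hbT : (((N - k : ℕ)) : ℝ≥0∞) ≠ ⊤ := ENNReal.natCast_ne_top _
  have ha0 : ENNReal.ofReal ((k:ℝ)/N) ≠ 0 := by
    rw [Ne, ENNReal.ofReal_eq_zero]
    push_neg
    positivity
  have hsplit : ENNReal.ofReal ((k:ℝ)*((N:ℝ)-k)/N)
      = ENNReal.ofReal ((k:ℝ)/N) * (((N - k : ℕ)) : ℝ≥0∞) := by
    rw [← ENNReal.ofReal_natCast (N-k), ← ENNReal.ofReal_mul (by positivity)]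
    congr 1
    rw [Nat.cast_sub hk2.le]
    field_simp
  rw [hsplit, ENNReal.mul_inv (Or.inl ha0) (Or.inl ENNReal.ofReal_ne_top)]
  calc 2 * (((N - k : ℕ)) : ℝ≥0∞)^2 * ((ENNReal.ofReal ((k:ℝ)/N))⁻¹ * (((N - k : ℕ)) : ℝ≥0∞)⁻¹)
      = 2 * (((N - k : ℕ)) : ℝ≥0∞) * (ENNReal.ofReal ((k:ℝ)/N))⁻¹
        * ((((N - k : ℕ)) : ℝ≥0∞) * (((N - k : ℕ)) : ℝ≥0∞)⁻¹) := by ring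
    _ = 2 * (((N - k : ℕ)) : ℝ≥0∞) * (ENNReal.ofReal ((k:ℝ)/N))⁻¹ := by
        rw [ENNReal.mul_inv_cancel hb0 hbT, mul_one]

/-- For `ρ` the uniform measure on `[0,1]` and `F^i` translation by `(i-1)/N` modulo `1`,
the pushforward `(F^1,…,F^N)_# ρ` minimizes the Coulomb cost among all measures on
`ℝ^N` with all one-dimensional marginals equal to `ρ`. -/
theorem stmt3 (N : ℕ) (hN : 2 ≤ N) (γ : Measure (Fin N → ℝ))
    (hγ : IsProbabilityMeasure γ)
    (hmarg : ∀ i : Fin N, γ.map (fun x => x i) = volume.restrict (Set.Icc (0:ℝ) 1)) :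
    ∫⁻ x, coul1 N x
        ∂((volume.restrict (Set.Icc (0:ℝ) 1)).map
          (fun t => fun i : Fin N => Int.fract (t + (i.val : ℝ) / N))) ≤
      ∫⁻ x, coul1 N x ∂γ := by
  haveI := hγ
  have hmeas : ∀ k : ℕ, Measurable fun x : Fin N → ℝ => (ENNReal.ofReal (Stil N k x))⁻¹ :=
    fun k => ((Stil_measurable N k).ennreal_ofReal).inv
  rw [lhs_eval N hN]
  calc ∑ k ∈ Finset.Ico 1 N, 2 * (((N - k : ℕ)) : ℝ≥0∞) * (ENNReal.ofReal ((k:ℝ)/N))⁻¹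
      = ∑ k ∈ Finset.Ico 1 N,
          2 * (((N - k : ℕ)) : ℝ≥0∞)^2 * (ENNReal.ofReal ((k:ℝ)*((N:ℝ)-k)/N))⁻¹ := by
        refine Finset.sum_congr rfl fun k hk => ?_
        rw [Finset.mem_Ico] at hk
        exact (perk N k hk.1 hk.2).symm
    _ = ∑ k ∈ Finset.Ico 1 N,
          2 * (((N - k : ℕ)) : ℝ≥0∞)^2 * (∫⁻ x, ENNReal.ofReal (Stil N k x) ∂γ)⁻¹ := by
        refine Finset.sum_congr rfl fun k hk => ?_
        rw [Finset.mem_Ico] at hk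
        rw [lint_Stil N k (by omega) (by omega) hmarg]
    _ ≤ ∑ k ∈ Finset.Ico 1 N,
          2 * (((N - k : ℕ)) : ℝ≥0∞)^2 * ∫⁻ x, (ENNReal.ofReal (Stil N k x))⁻¹ ∂γ := by
        refine Finset.sum_le_sum fun k _ => ?_
        exact mul_le_mul_right
          (inv_lintegral_le γ _ ((Stil_measurable N k).ennreal_ofReal.aemeasurable)) _
    _ = ∑ k ∈ Finset.Ico 1 N,
          ∫⁻ x, 2 * (((N - k : ℕ)) : ℝ≥0∞)^2 * (ENNReal.ofReal (Stil N k x))⁻¹ ∂γ := by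
        refine Finset.sum_congr rfl fun k _ => ?_
        rw [lintegral_const_mul _ (hmeas k)]
    _ = ∫⁻ x, ∑ k ∈ Finset.Ico 1 N,
          2 * (((N - k : ℕ)) : ℝ≥0∞)^2 * (ENNReal.ofReal (Stil N k x))⁻¹ ∂γ :=
        (lintegral_finset_sum _ fun k _ => measurable_const.mul (hmeas k)).symm
    _ ≤ ∫⁻ x, coul1 N x ∂γ := lintegral_mono fun x => main_pw N x
end

section
/- Let ρ be a radially symmetric probability measure on ℝ^d with radial law μ on (0,∞). Suppose γ̃ minimizes ∫ h dγ over measures γ on (0,∞)^N with all marginals μ, where h(r_1,...,r_N) = inf_{|x_i|=r_i} Σ_{i≠j} 1/|x_i−x_j|, and suppose there exist u_1,...,u_N : (0,∞) → ℝ with h(r_1,...,r_N) ≥ Σ_i u_i(r_i) everywhere and equality on spt(γ̃). Then any measure ρ_N ∈ Π(ρ) concentrated on points (x_1,...,x_N) attaining the infimum in h with (|x_1|,...,|x_N|) ∈ spt(γ̃) minimizes ∫ Σ_{i≠j} 1/|x_i−x_j| dρ_N over Π(ρ), and E_N[ρ] equals the minimum of the reduced one-dimensional problem. -/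
open MeasureTheory ENNReal

/-- The Coulomb cost `∑_{i ≠ j} 1/|x_i - x_j|`, valued in `[0,∞]`. -/
noncomputable def coul (d N : ℕ) (x : Fin N → EuclideanSpace ℝ (Fin d)) : ℝ≥0∞ :=
  ∑ i : Fin N, ∑ j : Fin N, if i ≠ j then (ENNReal.ofReal ‖x i - x j‖)⁻¹ else 0

/-- The reduced radial cost `h(r_1,…,r_N) = inf { c(x_1,…,x_N) : |x_i| = r_i }`. -/
noncomputable def hcost (d N : ℕ) (r : Fin N → ℝ) : ℝ≥0∞ :=
  ⨅ x ∈ {x : Fin N → EuclideanSpace ℝ (Fin d) | ∀ i, ‖x i‖ = r i}, coul d N x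

/-- The support of a measure: points all of whose open neighbourhoods have positive mass. -/
def spt {α : Type*} [TopologicalSpace α] [MeasurableSpace α]
    (γ : Measure α) : Set α :=
  {z | ∀ U : Set α, IsOpen U → z ∈ U → γ U ≠ 0}

/-! The Coulomb cost dominates `h ∘ |·|` pointwise, so by optimality of `γ̃` every
`γ ∈ Π(ρ)` costs at least `∫ h dγ̃`. Since `h = ∑ uᵢ` on `spt γ̃`, which carries `γ̃`, and
`ρ_N`-almost every configuration attains `h` at radii in `spt γ̃`, both `∫ c dρ_N` and
`∫ h dγ̃` equal `∑ᵢ ∫ uᵢ dμ`: they only see the common marginals `μ`. -/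

lemma ae_mem_spt {α : Type*} [TopologicalSpace α] [MeasurableSpace α]
    [SecondCountableTopology α] (γ : Measure α) : ∀ᵐ z ∂γ, z ∈ spt γ := by
  rw [ae_iff]
  have hcompl : {z | z ∉ spt γ} = ⋃₀ {U : Set α | IsOpen U ∧ γ U = 0} := by
    ext z
    simp [spt, and_comm, and_left_comm]
  obtain ⟨T, hTc, hTsub, hTeq⟩ :=
    TopologicalSpace.isOpen_sUnion_countable {U : Set α | IsOpen U ∧ γ U = 0}
      fun U hU => hU.1
  rw [hcompl, ← hTeq]
  exact (measure_sUnion_null_iff hTc).mpr fun U hU => (hTsub hU).2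

lemma hcost_le_coul (d N : ℕ) (x : Fin N → EuclideanSpace ℝ (Fin d)) :
    hcost d N (fun i => ‖x i‖) ≤ coul d N x :=
  iInf₂_le x fun _ => rfl

lemma ENNReal.nonneg_and_eq_ofReal_of_toEReal_eq {a : ℝ≥0∞} {s : ℝ}
    (h : (a : EReal) = s) : 0 ≤ s ∧ a = ENNReal.ofReal s := by
  have hs : 0 ≤ s := by exact_mod_cast h ▸ EReal.coe_ennreal_nonneg a
  refine ⟨hs, EReal.coe_ennreal_injective ?_⟩
  rw [h, EReal.coe_ennreal_ofReal, max_eq_left hs]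

lemma lintegral_ofReal_sum_comp_of_map_eq {Ω β ι : Type*} [MeasurableSpace Ω]
    [MeasurableSpace β] [Fintype ι] {P : Measure Ω} {f : ι → Ω → β}
    (hf : ∀ i, Measurable (f i)) {μ : ι → Measure β} (hmarg : ∀ i, P.map (f i) = μ i)
    {u : ι → β → ℝ} (hu : ∀ i, Integrable (u i) (μ i))
    (hnonneg : 0 ≤ᵐ[P] fun ω => ∑ i, u i (f i ω)) :
    ∫⁻ ω, ENNReal.ofReal (∑ i, u i (f i ω)) ∂P =
      ENNReal.ofReal (∑ i, ∫ t, u i t ∂μ i) := by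
  have hint : ∀ i, Integrable (fun ω => u i (f i ω)) P := fun i =>
    (integrable_map_measure (hmarg i ▸ (hu i).aestronglyMeasurable)
      (hf i).aemeasurable).mp (hmarg i ▸ hu i)
  have hval : ∀ i, ∫ ω, u i (f i ω) ∂P = ∫ t, u i t ∂μ i := fun i => by
    rw [← hmarg i, integral_map (hf i).aemeasurable
      (hmarg i ▸ (hu i).aestronglyMeasurable)]
  rw [← ofReal_integral_eq_lintegral_ofReal (integrable_finsetSum _ fun i _ => hint i)
    hnonneg, integral_finsetSum _ fun i _ => hint i]
  simp only [hval]

lemma measurable_pi_norm {ι E : Type*} [NormedAddCommGroup E] [MeasurableSpace E]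
    [OpensMeasurableSpace E] : Measurable fun (x : ι → E) j => ‖x j‖ :=
  measurable_pi_lambda _ fun j => (measurable_pi_apply j).norm

lemma map_norm_pi_map_eval {ι E : Type*} [NormedAddCommGroup E] [MeasurableSpace E]
    [OpensMeasurableSpace E] (γ : Measure (ι → E)) (i : ι) :
    (γ.map fun x j => ‖x j‖).map (fun r => r i) = (γ.map fun x => x i).map (‖·‖) := by
  rw [Measure.map_map (measurable_pi_apply i) measurable_pi_norm]
  exact (Measure.map_map measurable_norm (measurable_pi_apply i)).symm

theorem stmt11_general (d N : ℕ)
    (ρ : Measure (EuclideanSpace ℝ (Fin d)))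
    (μ : Measure ℝ) (hμ : μ = ρ.map (fun x => ‖x‖))
    (γt : Measure (Fin N → ℝ))
    (hγmarg : ∀ i : Fin N, γt.map (fun r => r i) = μ)
    (hγopt : ∀ γ : Measure (Fin N → ℝ), IsProbabilityMeasure γ →
      (∀ i : Fin N, γ.map (fun r => r i) = μ) →
      ∫⁻ r, hcost d N r ∂γt ≤ ∫⁻ r, hcost d N r ∂γ)
    (u : Fin N → ℝ → ℝ) (hu : ∀ i, Integrable (u i) μ)
    (heq : ∀ r ∈ spt γt,
      (hcost d N r).toEReal = ((∑ i : Fin N, u i (r i) : ℝ) : EReal))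
    (ρN : Measure (Fin N → EuclideanSpace ℝ (Fin d)))
    (hρNmarg : ∀ i : Fin N, ρN.map (fun x => x i) = ρ)
    (hconc : ∀ᵐ x ∂ρN, coul d N x = hcost d N (fun i => ‖x i‖) ∧
      (fun i => ‖x i‖) ∈ spt γt) :
    (∀ γ : Measure (Fin N → EuclideanSpace ℝ (Fin d)), IsProbabilityMeasure γ →
      (∀ i : Fin N, γ.map (fun x => x i) = ρ) →
      ∫⁻ x, coul d N x ∂ρN ≤ ∫⁻ x, coul d N x ∂γ) ∧
    ∫⁻ x, coul d N x ∂ρN = ∫⁻ r, hcost d N r ∂γt := by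
  have hspt r (hr : r ∈ spt γt) := ENNReal.nonneg_and_eq_ofReal_of_toEReal_eq (heq r hr)
  have hρNradii i : ρN.map (fun x => ‖x i‖) = μ := by
    rw [hμ, ← hρNmarg i]
    exact (Measure.map_map measurable_norm (measurable_pi_apply i)).symm
  have hvalue : ∫⁻ x, coul d N x ∂ρN = ∫⁻ r, hcost d N r ∂γt := calc
    _ = ∫⁻ x, ENNReal.ofReal (∑ i, u i ‖x i‖) ∂ρN :=
      lintegral_congr_ae <| hconc.mono fun x hx => hx.1.trans (hspt _ hx.2).2
    _ = ENNReal.ofReal (∑ i, ∫ t, u i t ∂μ) :=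
      lintegral_ofReal_sum_comp_of_map_eq (fun i => (measurable_pi_apply i).norm) hρNradii hu
        (hconc.mono fun x hx => (hspt _ hx.2).1)
    _ = ∫⁻ r, ENNReal.ofReal (∑ i, u i (r i)) ∂γt :=
      (lintegral_ofReal_sum_comp_of_map_eq measurable_pi_apply hγmarg hu
        ((ae_mem_spt γt).mono fun r hr => (hspt r hr).1)).symm
    _ = ∫⁻ r, hcost d N r ∂γt :=
      lintegral_congr_ae <| (ae_mem_spt γt).mono fun r hr => (hspt r hr).2.symm
  refine ⟨fun γ hγ hγmarg' => ?_, hvalue⟩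
  calc ∫⁻ x, coul d N x ∂ρN = ∫⁻ r, hcost d N r ∂γt := hvalue
    _ ≤ ∫⁻ r, hcost d N r ∂(γ.map fun x i => ‖x i‖) :=
      hγopt _ (Measure.isProbabilityMeasure_map measurable_pi_norm.aemeasurable)
        fun i => by rw [map_norm_pi_map_eval, hγmarg', hμ]
    _ ≤ ∫⁻ x, hcost d N (fun i => ‖x i‖) ∂γ := lintegral_map_le _ _
    _ ≤ ∫⁻ x, coul d N x ∂γ := lintegral_mono (hcost_le_coul d N)

/-- For a radially symmetric marginal `ρ`, a measure `ρ_N ∈ Π(ρ)` concentrated on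
configurations attaining the infimum defining `h` and with radii in the support of an
optimizer `γ̃` of the reduced one-dimensional problem (with dual potentials `u_i`)
minimizes the Coulomb cost over `Π(ρ)`, and `E_N[ρ]` equals the reduced minimum. -/
theorem stmt11 (d N : ℕ) (hd : 2 ≤ d) (hN : 2 ≤ N)
    (ρ : Measure (EuclideanSpace ℝ (Fin d))) [IsProbabilityMeasure ρ]
    (hradial : ∀ A : EuclideanSpace ℝ (Fin d) ≃ₗᵢ[ℝ] EuclideanSpace ℝ (Fin d),
      ρ.map A = ρ)
    (μ : Measure ℝ) (hμ : μ = ρ.map (fun x => ‖x‖))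
    (γt : Measure (Fin N → ℝ)) [IsProbabilityMeasure γt]
    (hγmarg : ∀ i : Fin N, γt.map (fun r => r i) = μ)
    (hγopt : ∀ γ : Measure (Fin N → ℝ), IsProbabilityMeasure γ →
      (∀ i : Fin N, γ.map (fun r => r i) = μ) →
      ∫⁻ r, hcost d N r ∂γt ≤ ∫⁻ r, hcost d N r ∂γ)
    (u : Fin N → ℝ → ℝ) (hu : ∀ i, Integrable (u i) μ)
    (hlb : ∀ r : Fin N → ℝ, (∀ i, 0 < r i) →
      ((∑ i : Fin N, u i (r i) : ℝ) : EReal) ≤ (hcost d N r).toEReal)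
    (heq : ∀ r ∈ spt γt,
      (hcost d N r).toEReal = ((∑ i : Fin N, u i (r i) : ℝ) : EReal))
    (ρN : Measure (Fin N → EuclideanSpace ℝ (Fin d))) [IsProbabilityMeasure ρN]
    (hρNmarg : ∀ i : Fin N, ρN.map (fun x => x i) = ρ)
    (hconc : ∀ᵐ x ∂ρN, coul d N x = hcost d N (fun i => ‖x i‖) ∧
      (fun i => ‖x i‖) ∈ spt γt) :
    (∀ γ : Measure (Fin N → EuclideanSpace ℝ (Fin d)), IsProbabilityMeasure γ →
      (∀ i : Fin N, γ.map (fun x => x i) = ρ) →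
      ∫⁻ x, coul d N x ∂ρN ≤ ∫⁻ x, coul d N x ∂γ) ∧
    ∫⁻ x, coul d N x ∂ρN = ∫⁻ r, hcost d N r ∂γt :=
  stmt11_general d N ρ μ hμ γt hγmarg hγopt u hu heq ρN hρNmarg hconc
end

section
/- For any N ≥ 3, any critical point (x_1,...,x_N) of the constrained minimization of Σ_{i≠j} 1/|x_i − x_j| subject to |x_i| = r_i (with all x_i distinct) satisfies that the vectors x_1,...,x_N are linearly dependent whenever d ≥ N. -/
open RealInnerProductSpace

/-- At a constrained critical point of `∑_{i≠j} 1/|x_i−x_j|` subject to `|x_i| = r_i`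
(Lagrange conditions `∑_{j≠i} (x_i−x_j)/|x_i−x_j|³ = λ_i x_i`, with all `x_i` distinct),
the vectors `x_1,…,x_N` are linearly dependent whenever `d ≥ N ≥ 3`. -/
theorem stmt18 (d N : ℕ) (hN : 3 ≤ N) (hdN : N ≤ d)
    (r : Fin N → ℝ) (hr : ∀ i, 0 < r i)
    (x : Fin N → EuclideanSpace ℝ (Fin d))
    (hnorm : ∀ i, ‖x i‖ = r i)
    (hdistinct : ∀ i j : Fin N, i ≠ j → x i ≠ x j)
    (lam : Fin N → ℝ)
    (hcrit : ∀ i : Fin N,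
      (∑ j : Fin N, if j ≠ i then (‖x i - x j‖ ^ 3)⁻¹ • (x i - x j) else 0) =
        lam i • x i) :
    ¬ LinearIndependent ℝ x := by
  intro hLI
  set f : Fin N → Fin N → EuclideanSpace ℝ (Fin d) :=
    fun i j => if j ≠ i then (‖x i - x j‖ ^ 3)⁻¹ • (x i - x j) else 0 with hf
  -- antisymmetry
  have hanti : ∀ i j, f i j = - f j i := by
    intro i j
    by_cases h : j = i
    · subst h; simp [hf]
    · simp only [hf, if_pos h, if_pos (Ne.symm h), norm_sub_rev (x j) (x i)]
      rw [← smul_neg, neg_sub]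
  -- sum of Lagrange equations is zero
  have h0 : ∑ i, lam i • x i = 0 := by
    have hS : ∑ i, ∑ j, f i j = ∑ i, lam i • x i :=
      Finset.sum_congr rfl (fun i _ => hcrit i)
    rw [← hS]
    have h1 : ∑ i, ∑ j, f i j = ∑ i, ∑ j, (-(f i j)) := by
      rw [Finset.sum_comm]
      exact Finset.sum_congr rfl fun a _ => Finset.sum_congr rfl fun b _ => hanti b a
    have h2 : (∑ i, ∑ j, f i j) + (∑ i, ∑ j, f i j) = 0 := by
      nth_rewrite 2 [h1]; simp
    have h3 : (2:ℝ) • (∑ i, ∑ j, f i j) = 0 := by rw [two_smul]; exact h2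
    exact (smul_eq_zero.mp h3).resolve_left (by norm_num)
  -- linear independence forces all lam = 0
  have hall : ∀ i, lam i = 0 := Fintype.linearIndependent_iff.mp hLI lam h0
  -- inner products: lam i * ‖x i‖² = ∑ j g i j
  set g : Fin N → Fin N → ℝ :=
    fun i j => if j ≠ i then ⟪x i - x j, x i⟫ * (‖x i - x j‖ ^ 3)⁻¹ else 0 with hg
  have hkey : ∀ i, ∑ j, g i j = lam i * ‖x i‖ ^ 2 := by
    intro i
    have h := congrArg (fun v : EuclideanSpace ℝ (Fin d) => ⟪v, x i⟫) (hcrit i)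
    simp only [sum_inner, real_inner_smul_left] at h
    rw [show lam i * ‖x i‖ ^ 2 = lam i * ⟪x i, x i⟫ by
      rw [real_inner_self_eq_norm_sq], ← h]
    apply Finset.sum_congr rfl
    intro j _
    by_cases hji : j = i
    · simp [hg, hji]
    · simp only [hg, if_pos hji,
        apply_ite (fun v : EuclideanSpace ℝ (Fin d) => ⟪v, x i⟫), if_pos hji,
        inner_zero_left, real_inner_smul_left]
      ring
  -- with all lam = 0, the symmetrized double sum is zero...
  have hzero : ∑ i, ∑ j, g i j = 0 := by simp [hkey, hall]
  -- ...but it equals ∑_{i≠j} ‖x i - x j‖⁻¹ (diagonal-free), which is positive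
  have hsym : ∀ i j, i ≠ j → g i j + g j i = ‖x i - x j‖⁻¹ := by
    intro i j hij
    have hne : x i - x j ≠ 0 := sub_ne_zero.mpr (hdistinct i j hij)
    have hpos : (0:ℝ) < ‖x i - x j‖ := norm_pos_iff.mpr hne
    have hsq : ⟪x i - x j, x i⟫ + ⟪x j - x i, x j⟫ = ‖x i - x j‖ ^ 2 := by
      have e1 : ⟪x j - x i, x j⟫ = -⟪x i - x j, x j⟫ := by
        rw [← neg_sub (x i) (x j), inner_neg_left]
      rw [e1, ← real_inner_self_eq_norm_sq, inner_sub_right]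
      ring
    simp only [hg, if_pos (Ne.symm hij), if_pos hij, norm_sub_rev (x j) (x i)]
    rw [← add_mul, hsq]
    rw [eq_comm, inv_eq_iff_eq_inv, eq_comm, inv_eq_iff_eq_inv]
    field_simp
  have hgd : ∀ i j, i = j → g i j = 0 := by
    intro i j h; simp [hg, h]
  have hdouble : (∑ i, ∑ j, g i j) + (∑ i, ∑ j, g i j) =
      ∑ i, ∑ j, (if j ≠ i then ‖x i - x j‖⁻¹ else 0) := by
    nth_rewrite 2 [Finset.sum_comm]
    rw [← Finset.sum_add_distrib]
    apply Finset.sum_congr rfl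
    intro i _
    rw [← Finset.sum_add_distrib]
    apply Finset.sum_congr rfl
    intro j _
    by_cases h : j = i
    · subst h; simp [hgd _ _ rfl]
    · rw [if_pos h]
      exact hsym i j (Ne.symm h)
  -- positivity
  have hposum : 0 < ∑ i, ∑ j, (if j ≠ i then ‖x i - x j‖⁻¹ else 0) := by
    set i0 : Fin N := ⟨0, by omega⟩
    set i1 : Fin N := ⟨1, by omega⟩
    have h01 : i1 ≠ i0 := by simp [i0, i1, Fin.ext_iff]
    have hnonneg : ∀ (i j : Fin N), 0 ≤ (if j ≠ i then ‖x i - x j‖⁻¹ else 0) := by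
      intro i j; split <;> positivity
    refine Finset.sum_pos' (fun i _ => Finset.sum_nonneg fun j _ => hnonneg i j)
      ⟨i0, Finset.mem_univ _, ?_⟩
    refine Finset.sum_pos' (fun j _ => hnonneg i0 j) ⟨i1, Finset.mem_univ _, ?_⟩
    rw [if_pos h01]
    have hne : x i0 - x i1 ≠ 0 := sub_ne_zero.mpr (hdistinct i0 i1 (Ne.symm h01))
    have : (0:ℝ) < ‖x i0 - x i1‖ := norm_pos_iff.mpr hne
    positivity
  rw [hzero, add_zero] at hdouble
  linarith [hdouble ▸ hposum]
end

section
/- Let ρ_N be a probability measure on (ℝ^d)^N that is invariant under the diagonal action of SO(d), and suppose its support contains a point (x_1,...,x_N) whose components span ℝ^d (d ≥ 2). Let ρ̄_N be obtained by averaging ρ_N over the full orthogonal group O(d) (diagonal action). If ρ_N is not invariant under some reflection, then the supports of the S_N-symmetrizations of ρ_N and ρ̄_N can differ; specifically, if the set of points in spt(ρ_N) with radii (|x_1|,...,|x_N|) is exactly the SO(d)-orbit of (x_1,...,x_N), and the radii are distinct, then for Ā ∈ O(d)\SO(d) the point (Ā x_1,...,Ā x_N) lies in spt(ρ̄_N)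 but not in the support of the S_N-symmetrization of ρ_N. -/
open MeasureTheory ENNReal

/-- Let `ρ_N` be a probability measure on `(ℝ^d)^N` invariant under the diagonal `SO(d)`
action, whose support contains a spanning tuple `(x_1,…,x_N)` with distinct radii, and
suppose (equivariant-choice hypothesis) that for every permutation `σ` the points of
`spt ρ_N` with radii `(|x_{σ(1)}|,…,|x_{σ(N)}|)` form exactly the `SO(d)`-orbit of
`(x_{σ(1)},…,x_{σ(N)})`.  Then for a reflection `Ā ∈ O(d)\SO(d)`, the point
`(Ā x_1,…,Ā x_N)` lies in the support of the `O(d)`-average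
`ρ̄_N = ½(ρ_N + Ā_# ρ_N)` but not in the support of the `S_N`-symmetrization of `ρ_N`. -/
theorem stmt19 (d N : ℕ) (hd : 2 ≤ d)
    (ρN : Measure (Fin N → EuclideanSpace ℝ (Fin d))) [IsProbabilityMeasure ρN]
    (hinv : ∀ A : EuclideanSpace ℝ (Fin d) ≃ₗᵢ[ℝ] EuclideanSpace ℝ (Fin d),
      LinearMap.det (A.toLinearEquiv :
        EuclideanSpace ℝ (Fin d) →ₗ[ℝ] EuclideanSpace ℝ (Fin d)) = 1 →
      ρN.map (fun z i => A (z i)) = ρN)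
    (x : Fin N → EuclideanSpace ℝ (Fin d))
    (hxspt : x ∈ spt ρN)
    (hspan : Submodule.span ℝ (Set.range x) = ⊤)
    (hdistinct : ∀ i j : Fin N, i ≠ j → ‖x i‖ ≠ ‖x j‖)
    (horbit : ∀ σ : Equiv.Perm (Fin N),
      {z : Fin N → EuclideanSpace ℝ (Fin d) |
          z ∈ spt ρN ∧ ∀ i, ‖z i‖ = ‖x (σ i)‖} =
        {z : Fin N → EuclideanSpace ℝ (Fin d) |
          ∃ A : EuclideanSpace ℝ (Fin d) ≃ₗᵢ[ℝ] EuclideanSpace ℝ (Fin d),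
            LinearMap.det (A.toLinearEquiv :
              EuclideanSpace ℝ (Fin d) →ₗ[ℝ] EuclideanSpace ℝ (Fin d)) = 1 ∧
            z = fun i => A (x (σ i))})
    (Abar : EuclideanSpace ℝ (Fin d) ≃ₗᵢ[ℝ] EuclideanSpace ℝ (Fin d))
    (hAbar : LinearMap.det (Abar.toLinearEquiv :
      EuclideanSpace ℝ (Fin d) →ₗ[ℝ] EuclideanSpace ℝ (Fin d)) = -1) :
    (fun i => Abar (x i)) ∈
        spt ((2 : ℝ≥0∞)⁻¹ • (ρN + ρN.map (fun z i => Abar (z i)))) ∧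
    (fun i => Abar (x i)) ∉
        spt ((N.factorial : ℝ≥0∞)⁻¹ •
          ∑ σ : Equiv.Perm (Fin N), ρN.map (fun z => z ∘ σ)) := by
  classical
  have hfc : Continuous (fun z : Fin N → EuclideanSpace ℝ (Fin d) => fun i => Abar (z i)) :=
    continuous_pi fun i => Abar.continuous.comp (continuous_apply i)
  have hfmeas : Measurable (fun z : Fin N → EuclideanSpace ℝ (Fin d) => fun i => Abar (z i)) :=
    hfc.measurable
  constructor
  · intro U hU hzU
    have hpre : IsOpen ((fun z : Fin N → EuclideanSpace ℝ (Fin d) => fun i => Abar (z i)) ⁻¹' U) :=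
      hU.preimage hfc
    have hxmem : x ∈ (fun z : Fin N → EuclideanSpace ℝ (Fin d) => fun i => Abar (z i)) ⁻¹' U := hzU
    have h2 := hxspt _ hpre hxmem
    have h1 : ρN.map (fun z i => Abar (z i)) U
        = ρN ((fun z : Fin N → EuclideanSpace ℝ (Fin d) => fun i => Abar (z i)) ⁻¹' U) :=
      Measure.map_apply hfmeas hU.measurableSet
    intro hcontra
    rw [Measure.smul_apply, Measure.add_apply, h1, smul_eq_mul, mul_eq_zero] at hcontra
    rcases hcontra with h | h
    · simp at h
    · exact h2 (by simpa using (add_eq_zero.mp h).2)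
  · intro hmem
    -- For each permutation σ, the translated point is not in spt ρN.
    have hw : ∀ σ : Equiv.Perm (Fin N), (fun i => Abar (x (σ⁻¹ i))) ∉ spt ρN := by
      intro σ hwspt
      have hmem2 : (fun i => Abar (x (σ⁻¹ i))) ∈
          {z : Fin N → EuclideanSpace ℝ (Fin d) | z ∈ spt ρN ∧ ∀ i, ‖z i‖ = ‖x (σ⁻¹ i)‖} :=
        ⟨hwspt, fun i => Abar.norm_map _⟩
      rw [horbit σ⁻¹] at hmem2
      obtain ⟨A, hA1, hAeq⟩ := hmem2
      have heq : ∀ i, Abar (x i) = A (x i) := by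
        intro i
        have := congrFun hAeq (σ i)
        simpa using this
      have hlin : (Abar.toLinearEquiv :
            EuclideanSpace ℝ (Fin d) →ₗ[ℝ] EuclideanSpace ℝ (Fin d))
          = (A.toLinearEquiv :
            EuclideanSpace ℝ (Fin d) →ₗ[ℝ] EuclideanSpace ℝ (Fin d)) := by
        apply LinearMap.ext_on hspan
        rintro _ ⟨i, rfl⟩
        exact heq i
      rw [hlin, hA1] at hAbar
      norm_num at hAbar
    -- choose bad neighbourhoods
    have hV : ∀ σ : Equiv.Perm (Fin N), ∃ V : Set (Fin N → EuclideanSpace ℝ (Fin d)),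
        IsOpen V ∧ (fun i => Abar (x (σ⁻¹ i))) ∈ V ∧ ρN V = 0 := by
      intro σ
      have := hw σ
      simp only [spt, Set.mem_setOf_eq, not_forall] at this
      obtain ⟨V, hVo, hVm, hV0⟩ := this
      exact ⟨V, hVo, hVm, not_not.mp hV0⟩
    choose V hVo hVm hV0 using hV
    set U : Set (Fin N → EuclideanSpace ℝ (Fin d)) :=
      ⋂ σ : Equiv.Perm (Fin N),
        (fun z : Fin N → EuclideanSpace ℝ (Fin d) => z ∘ ⇑σ⁻¹) ⁻¹' V σ with hUdef
    have hcomp : ∀ σ : Equiv.Perm (Fin N),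
        Continuous (fun z : Fin N → EuclideanSpace ℝ (Fin d) => z ∘ ⇑σ) :=
      fun σ => continuous_pi fun i => continuous_apply (σ i)
    have hUopen : IsOpen U :=
      isOpen_iInter_of_finite fun σ => (hVo σ).preimage (hcomp σ⁻¹)
    have hUmem : (fun i => Abar (x i)) ∈ U := by
      refine Set.mem_iInter.mpr fun σ => ?_
      show ((fun i => Abar (x i)) ∘ ⇑σ⁻¹) ∈ V σ
      exact hVm σ
    have hzero : ((N.factorial : ℝ≥0∞)⁻¹ •
        ∑ σ : Equiv.Perm (Fin N), ρN.map (fun z => z ∘ σ)) U = 0 := by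
      rw [Measure.smul_apply, smul_eq_mul]
      have hsum : (∑ σ : Equiv.Perm (Fin N),
            ρN.map (fun z : Fin N → EuclideanSpace ℝ (Fin d) => z ∘ ⇑σ)) U
          = ∑ σ : Equiv.Perm (Fin N),
            (ρN.map (fun z : Fin N → EuclideanSpace ℝ (Fin d) => z ∘ ⇑σ)) U := by
        simp [Measure.finset_sum_apply]
      rw [hsum]
      have hterm : ∀ σ : Equiv.Perm (Fin N),
          (ρN.map (fun z : Fin N → EuclideanSpace ℝ (Fin d) => z ∘ ⇑σ)) U = 0 := by
        intro σ
        have hmeas : Measurable (fun z : Fin N → EuclideanSpace ℝ (Fin d) => z ∘ ⇑σ) :=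
          (hcomp σ).measurable
        rw [Measure.map_apply hmeas hUopen.measurableSet]
        refine measure_mono_null ?_ (hV0 σ)
        intro z hz
        have hz' := Set.mem_iInter.mp hz σ
        have hmem3 : ((z ∘ ⇑σ) ∘ ⇑σ⁻¹) ∈ V σ := hz'
        have hzz : ((z ∘ ⇑σ) ∘ ⇑σ⁻¹) = z := by
          funext i; simp
        rwa [hzz] at hmem3
      simp [hterm]
    exact hmem U hUopen hUmem hzero
end
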